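/- For every measurable function ψ : ℝⁿ → ℝⁿ with E_{x₀∼q₀} E_{x_t∼k(·|x₀)}[‖∇_{x_t} ln k(x_t|x₀) − ψ(x_t)‖²] < ∞, one has E_{x₀∼q₀} E_{x_t∼k(·|x₀)} [‖∇_{x_t} ln k(x_t|x₀) − ψ(x_t)‖²] = E_{x_t∼p} [‖∇_{x_t} ln p(x_t) − ψ(x_t)‖²] + C, where the constant C does not depend on ψ. In particular, over any family of such functions ψ, the two objectives have the same minimizers. -/

import Mathlib

/-!
Write `w(x₀, x) = q₀(x₀) k(x | x₀)`, whose `x`-marginal is `p`. Expanding the square, each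
objective is `E‖s‖² - 2 E⟪s, ψ⟫ + E‖ψ‖²` for its own score `s`. The `‖ψ‖²` terms agree since `p`
is the marginal of `w`, and the cross terms agree since `w ∇ ln k = q₀ ∇ₓk` and
`∫ q₀(x₀) ∇ₓk(x | x₀) dx₀ = ∇p(x) = p(x) ∇ ln p(x)` for almost every `x`. That last identity is
checked weakly: against a test function `φ`, integrating by parts in `x` for each `x₀` and
swapping the integrals turns `∫ φ ∫ q₀ ∂ᵥk` into `-∫ ∂ᵥφ p = ∫ φ ∂ᵥp`, so no differentiation
under the integral sign is needed.
-/

open MeasureTheory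

noncomputable section

/-- `ℝⁿ` as a Euclidean space. -/
abbrev Euc (n : ℕ) := EuclideanSpace ℝ (Fin n)

/-- Score `∇ ln f` of a positive function `f`. -/
def scoreOf {n : ℕ} (f : Euc n → ℝ) (x : Euc n) : Euc n :=
  gradient (fun u => Real.log (f u)) x

/-- Denoising score matching objective:
`E_{x₀∼q₀} E_{x_t∼k(·|x₀)} [‖∇_{x_t} ln k(x_t|x₀) − ψ(x_t)‖²]`. -/
def dsmObj (n : ℕ) (q₀ : Euc n → ℝ) (k : Euc n → Euc n → ℝ) (ψ : Euc n → Euc n) : ℝ :=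
  ∫ z : Euc n × Euc n, q₀ z.1 * k z.2 z.1 * ‖scoreOf (fun u => k u z.1) z.2 - ψ z.2‖ ^ 2

/-- Score matching objective against the marginal:
`E_{x_t∼p} [‖∇_{x_t} ln p(x_t) − ψ(x_t)‖²]`. -/
def smObj (n : ℕ) (p : Euc n → ℝ) (ψ : Euc n → Euc n) : ℝ :=
  ∫ x : Euc n, p x * ‖scoreOf p x - ψ x‖ ^ 2

/-- Finiteness of the denoising objective (integrability of its integrand). -/
def dsmFin (n : ℕ) (q₀ : Euc n → ℝ) (k : Euc n → Euc n → ℝ) (ψ : Euc n → Euc n) : Prop :=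
  Integrable (fun z : Euc n × Euc n =>
    q₀ z.1 * k z.2 z.1 * ‖scoreOf (fun u => k u z.1) z.2 - ψ z.2‖ ^ 2)

/-- Finiteness of the marginal objective (integrability of its integrand). -/
def smFin (n : ℕ) (p : Euc n → ℝ) (ψ : Euc n → Euc n) : Prop :=
  Integrable (fun x : Euc n => p x * ‖scoreOf p x - ψ x‖ ^ 2)

section WeightedSquare

variable {X F : Type*} [MeasurableSpace X] {m : Measure X}
  [NormedAddCommGroup F] {w : X → ℝ} {s ψ : X → F}

lemma integrable_mul_norm_sq_of_mul_norm_sub_sq (hw0 : 0 ≤ w) (hw : AEStronglyMeasurable w m)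
    (hψ : AEStronglyMeasurable ψ m) (hws : Integrable (fun x => w x * ‖s x‖ ^ 2) m)
    (hwsψ : Integrable (fun x => w x * ‖s x - ψ x‖ ^ 2) m) :
    Integrable (fun x => w x * ‖ψ x‖ ^ 2) m := by
  refine ((hwsψ.add hws).const_mul 2).mono' (hw.mul (hψ.norm.pow 2)) (.of_forall fun x => ?_)
  have hψx : ‖ψ x‖ ≤ ‖s x - ψ x‖ + ‖s x‖ := by
    simpa using norm_sub_le (s x - ψ x) (s x)
  have hsq : ‖ψ x‖ ^ 2 ≤ 2 * (‖s x - ψ x‖ ^ 2 + ‖s x‖ ^ 2) := by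
    nlinarith [two_mul_le_add_sq ‖s x - ψ x‖ ‖s x‖, norm_nonneg (ψ x)]
  have hwx : 0 ≤ w x := hw0 x
  rw [Real.norm_of_nonneg (by positivity)]
  simp only [Pi.add_apply]
  nlinarith [mul_le_mul_of_nonneg_left hsq hwx]

lemma integrable_mul_inner_of_mul_norm_sq [InnerProductSpace ℝ F] (hw0 : 0 ≤ w)
    (hw : AEStronglyMeasurable w m) (hs : AEStronglyMeasurable s m) (hψ : AEStronglyMeasurable ψ m)
    (hws : Integrable (fun x => w x * ‖s x‖ ^ 2) m)
    (hwψ : Integrable (fun x => w x * ‖ψ x‖ ^ 2) m) :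
    Integrable (fun x => w x * inner ℝ (s x) (ψ x)) m := by
  refine ((hws.add hwψ).div_const 2).mono' (hw.mul (hs.inner hψ)) (.of_forall fun x => ?_)
  have hinner : 2 * |inner ℝ (s x) (ψ x)| ≤ ‖s x‖ ^ 2 + ‖ψ x‖ ^ 2 :=
    (mul_le_mul_of_nonneg_left (abs_real_inner_le_norm _ _) zero_le_two).trans
      (by simpa [mul_assoc] using two_mul_le_add_sq ‖s x‖ ‖ψ x‖)
  rw [norm_mul, Real.norm_of_nonneg (hw0 x), Real.norm_eq_abs]
  simp only [Pi.add_apply]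
  nlinarith [mul_le_mul_of_nonneg_left hinner (hw0 x)]

lemma integrable_smul_of_mul_norm_sq [NormedSpace ℝ F] (hw0 : 0 ≤ w)
    (hs : AEStronglyMeasurable s m) (hw : Integrable w m)
    (hws : Integrable (fun x => w x * ‖s x‖ ^ 2) m) :
    Integrable (fun x => w x • s x) m := by
  refine ((hw.add hws).div_const 2).mono' (hw.aestronglyMeasurable.smul hs)
    (.of_forall fun x => ?_)
  rw [norm_smul, Real.norm_of_nonneg (hw0 x)]
  simp only [Pi.add_apply]
  nlinarith [mul_nonneg (hw0 x) (sq_nonneg (‖s x‖ - 1))]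

lemma integral_mul_norm_sub_sq [InnerProductSpace ℝ F] (hw0 : 0 ≤ w)
    (hw : AEStronglyMeasurable w m) (hs : AEStronglyMeasurable s m) (hψ : AEStronglyMeasurable ψ m)
    (hws : Integrable (fun x => w x * ‖s x‖ ^ 2) m)
    (hwsψ : Integrable (fun x => w x * ‖s x - ψ x‖ ^ 2) m) :
    ∫ x, w x * ‖s x - ψ x‖ ^ 2 ∂m = ∫ x, w x * ‖s x‖ ^ 2 ∂m
      - 2 * ∫ x, w x * inner ℝ (s x) (ψ x) ∂m + ∫ x, w x * ‖ψ x‖ ^ 2 ∂m := by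
  have hwψ := integrable_mul_norm_sq_of_mul_norm_sub_sq hw0 hw hψ hws hwsψ
  have hwsψ' : Integrable (fun x => 2 * (w x * inner ℝ (s x) (ψ x))) m :=
    (integrable_mul_inner_of_mul_norm_sq hw0 hw hs hψ hws hwψ).const_mul 2
  have hws' : Integrable (fun x => w x * ‖s x‖ ^ 2 - 2 * (w x * inner ℝ (s x) (ψ x))) m :=
    hws.sub hwsψ'
  have hexpand : (fun x => w x * ‖s x - ψ x‖ ^ 2) = fun x =>
      (w x * ‖s x‖ ^ 2 - 2 * (w x * inner ℝ (s x) (ψ x))) + w x * ‖ψ x‖ ^ 2 := by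
    funext x
    rw [norm_sub_sq_real]
    ring
  rw [hexpand, integral_add hws' hwψ, integral_sub hws hwsψ', integral_const_mul]

end WeightedSquare

section Marginal

variable {α β : Type*} [MeasurableSpace α] [MeasurableSpace β] {ν : Measure α} {μ : Measure β}
  [SFinite μ]

lemma integrable_prod_mul_of_integral_eq_one {q : α → ℝ} {k : β → α → ℝ} (hq : Integrable q ν)
    (hk0 : ∀ a x, 0 ≤ k x a) (hk1 : ∀ a, ∫ x, k x a ∂μ = 1)
    (hqk : AEStronglyMeasurable (fun z : α × β => q z.1 * k z.2 z.1) (ν.prod μ)) :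
    Integrable (fun z : α × β => q z.1 * k z.2 z.1) (ν.prod μ) := by
  have hk (a : α) : Integrable (k · a) μ := .of_integral_ne_zero (by simp [hk1])
  refine (integrable_prod_iff hqk).2 ⟨.of_forall fun a => (hk a).const_mul (q a), ?_⟩
  refine hq.norm.congr (.of_forall fun a => ?_)
  simp_rw [norm_mul, Real.norm_of_nonneg (hk0 a _)]
  rw [integral_const_mul, hk1, mul_one]

lemma integral_prod_mul_comp_snd [SFinite ν] {w : α × β → ℝ} {p f : β → ℝ}
    (hwf : Integrable (fun z => w z * f z.2) (ν.prod μ))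
    (hp : ∀ᵐ y ∂μ, ∫ x, w (x, y) ∂ν = p y) :
    ∫ z, w z * f z.2 ∂(ν.prod μ) = ∫ y, p y * f y ∂μ := by
  rw [integral_prod_symm _ hwf]
  refine integral_congr_ae (hp.mono fun y hy => ?_)
  simp only [integral_mul_const, hy]

lemma integral_prod_inner_comp_snd [SFinite ν] {F : Type*} [NormedAddCommGroup F]
    [InnerProductSpace ℝ F] [CompleteSpace F] {G : α × β → F} {g ψ : β → F}
    (hG : Integrable G (ν.prod μ))
    (hGψ : Integrable (fun z => inner ℝ (G z) (ψ z.2)) (ν.prod μ))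
    (hg : ∀ᵐ y ∂μ, ∫ x, G (x, y) ∂ν = g y) :
    ∫ z, inner ℝ (G z) (ψ z.2) ∂(ν.prod μ) = ∫ y, inner ℝ (g y) (ψ y) ∂μ := by
  rw [integral_prod_symm _ hGψ]
  refine integral_congr_ae ((hG.prod_left_ae.and hg).mono fun y ⟨hGy, hy⟩ => ?_)
  change ∫ x, inner ℝ (G (x, y)) (ψ y) ∂ν = inner ℝ (g y) (ψ y)
  rw [← hy, real_inner_comm, ← integral_inner hGy]
  simp_rw [real_inner_comm (ψ y)]

theorem integral_prod_mul_norm_sub_sq_eq_add [SFinite ν] {F : Type*} [NormedAddCommGroup F]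
    [InnerProductSpace ℝ F] [CompleteSpace F]
    {w : α × β → ℝ} {s : α × β → F} {p : β → ℝ} {sp ψ : β → F}
    (hw0 : 0 ≤ w) (hp0 : 0 ≤ p) (hw : Integrable w (ν.prod μ))
    (hs : AEStronglyMeasurable s (ν.prod μ)) (hsp : AEStronglyMeasurable sp μ)
    (hψ : AEStronglyMeasurable ψ μ)
    (hws : Integrable (fun z => w z * ‖s z‖ ^ 2) (ν.prod μ))
    (hpsp : Integrable (fun y => p y * ‖sp y‖ ^ 2) μ)
    (hwsψ : Integrable (fun z => w z * ‖s z - ψ z.2‖ ^ 2) (ν.prod μ))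
    (hpspψ : Integrable (fun y => p y * ‖sp y - ψ y‖ ^ 2) μ)
    (hp : ∀ᵐ y ∂μ, ∫ x, w (x, y) ∂ν = p y)
    (hsp_eq : ∀ᵐ y ∂μ, ∫ x, w (x, y) • s (x, y) ∂ν = p y • sp y) :
    ∫ z, w z * ‖s z - ψ z.2‖ ^ 2 ∂(ν.prod μ) = ∫ y, p y * ‖sp y - ψ y‖ ^ 2 ∂μ
      + (∫ z, w z * ‖s z‖ ^ 2 ∂(ν.prod μ) - ∫ y, p y * ‖sp y‖ ^ 2 ∂μ) := by
  have hp_int : Integrable p μ := hw.swap.integral_prod_left.congr hp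
  have hψ' : AEStronglyMeasurable (fun z => ψ z.2) (ν.prod μ) := hψ.comp_snd
  have hwψ :=
    integrable_mul_norm_sq_of_mul_norm_sub_sq hw0 hw.aestronglyMeasurable hψ' hws hwsψ
  have hcross : ∫ z, w z * inner ℝ (s z) (ψ z.2) ∂(ν.prod μ)
      = ∫ y, p y * inner ℝ (sp y) (ψ y) ∂μ := by
    have hwsψ' :=
      integrable_mul_inner_of_mul_norm_sq hw0 hw.aestronglyMeasurable hs hψ' hws hwψ
    simp_rw [← real_inner_smul_left] at hwsψ' ⊢
    exact integral_prod_inner_comp_snd (integrable_smul_of_mul_norm_sq hw0 hs hw hws) hwsψ'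
      hsp_eq
  rw [integral_mul_norm_sub_sq hw0 hw.aestronglyMeasurable hs hψ' hws hwsψ,
    integral_mul_norm_sub_sq hp0 hp_int.aestronglyMeasurable hsp hψ hpsp hpspψ, hcross,
    integral_prod_mul_comp_snd (f := fun y => ‖ψ y‖ ^ 2) hwψ hp]
  ring

end Marginal

section Derivatives

variable {α E : Type*} [MeasurableSpace α] {ν : Measure α} [NormedAddCommGroup E]
  [NormedSpace ℝ E] [MeasurableSpace E] [BorelSpace E]

lemma measurable_fderiv_apply_of_measurable_uncurry {f : E → α → ℝ}
    (hf : Measurable (Function.uncurry f)) (hd : ∀ a, Differentiable ℝ (f · a)) (v : E) :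
    Measurable fun z : α × E => fderiv ℝ (f · z.1) z.2 v := by
  have hquot (m : ℕ) : Measurable fun z : α × E =>
      ((m : ℝ) + 1) * (f (z.2 + ((m : ℝ) + 1)⁻¹ • v) z.1 - f z.2 z.1) := by
    refine Measurable.const_mul (Measurable.sub ?_ ?_) _
    · exact hf.comp ((measurable_snd.add_const _).prodMk measurable_fst)
    · exact hf.comp (measurable_snd.prodMk measurable_fst)
  have ht : Filter.Tendsto (fun m : ℕ => ((m : ℝ) + 1)⁻¹) Filter.atTop (nhdsWithin 0 {0}ᶜ) :=
    tendsto_nhdsWithin_of_tendsto_nhds_of_eventually_within _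
      (by simpa [one_div] using tendsto_one_div_add_atTop_nhds_zero_nat (𝕜 := ℝ))
      (.of_forall fun m => by simp only [Set.mem_compl_iff, Set.mem_singleton_iff]; positivity)
  refine measurable_of_tendsto_metrizable hquot (tendsto_pi_nhds.2 fun z => ?_)
  convert ((hd z.1 z.2).hasFDerivAt.hasLineDerivAt v).tendsto_slope_zero.comp ht using 2 with m
  simp

variable [FiniteDimensional ℝ E] {μ : Measure E} [μ.IsAddHaarMeasure]

lemma integral_mul_fderiv_eq_neg_of_hasCompactSupport {φ f : E → ℝ} {v : E}
    (hφ : ContDiff ℝ 1 φ) (hφs : HasCompactSupport φ) (hf : Differentiable ℝ f)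
    (hf' : LocallyIntegrable (fun x => fderiv ℝ f x v) μ) :
    ∫ x, φ x * fderiv ℝ f x v ∂μ = -∫ x, fderiv ℝ φ x v * f x ∂μ :=
  integral_mul_fderiv_eq_neg_fderiv_mul_of_integrable
    ((((hφ.continuous_fderiv one_ne_zero).clm_apply continuous_const).mul
      hf.continuous).integrable_of_hasCompactSupport (hφs.fderiv_apply ℝ v).mul_right)
    (hf'.integrable_smul_left_of_hasCompactSupport hφ.continuous hφs)
    ((hφ.continuous.mul hf.continuous).integrable_of_hasCompactSupport hφs.mul_right)
    (fun x _ => hφ.differentiable one_ne_zero x) (fun x _ => hf x)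

lemma integral_mul_integral_fderiv_eq_neg [SFinite ν] {q : α → ℝ} {k : E → α → ℝ}
    {p φ : E → ℝ} {v : E} (hφ : ContDiff ℝ 1 φ) (hφs : HasCompactSupport φ)
    (hk : ∀ a, ContDiff ℝ 1 (k · a))
    (hqk : Integrable (fun z : α × E => q z.1 * k z.2 z.1) (ν.prod μ))
    (hqk' : Integrable (fun z : α × E => q z.1 * fderiv ℝ (k · z.1) z.2 v) (ν.prod μ))
    (hp : ∀ᵐ x ∂μ, p x = ∫ a, q a * k x a ∂ν) :
    ∫ x, φ x * ∫ a, q a * fderiv ℝ (k · a) x v ∂ν ∂μ = -∫ x, fderiv ℝ φ x v * p x ∂μ := by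
  have hφ' : Continuous fun x => fderiv ℝ φ x v :=
    (hφ.continuous_fderiv one_ne_zero).clm_apply continuous_const
  obtain ⟨C, hC⟩ := hφs.exists_bound_of_continuous hφ.continuous
  obtain ⟨C', hC'⟩ := (hφs.fderiv_apply ℝ v).exists_bound_of_continuous hφ'
  have h₁ : Integrable (fun z : α × E => φ z.2 * (q z.1 * fderiv ℝ (k · z.1) z.2 v))
      (ν.prod μ) :=
    hqk'.bdd_mul hφ.continuous.aestronglyMeasurable.comp_snd (.of_forall fun z => hC z.2)
  have h₂ : Integrable (fun z : α × E => fderiv ℝ φ z.2 v * (q z.1 * k z.2 z.1)) (ν.prod μ) :=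
    hqk.bdd_mul hφ'.aestronglyMeasurable.comp_snd (.of_forall fun z => hC' z.2)
  calc ∫ x, φ x * ∫ a, q a * fderiv ℝ (k · a) x v ∂ν ∂μ
      = ∫ x, ∫ a, φ x * (q a * fderiv ℝ (k · a) x v) ∂ν ∂μ := by
        simp_rw [integral_const_mul]
    _ = ∫ a, ∫ x, φ x * (q a * fderiv ℝ (k · a) x v) ∂μ ∂ν := by
        rw [← integral_prod_symm _ h₁, integral_prod _ h₁]
    _ = ∫ a, ∫ x, -(fderiv ℝ φ x v * (q a * k x a)) ∂μ ∂ν := by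
        refine integral_congr_ae (.of_forall fun a => ?_)
        have hka := integral_mul_fderiv_eq_neg_of_hasCompactSupport (μ := μ) (v := v) hφ hφs
          ((hk a).differentiable one_ne_zero)
          (((hk a).continuous_fderiv one_ne_zero).clm_apply continuous_const).locallyIntegrable
        simp only [mul_left_comm _ (q a), integral_const_mul, integral_neg, hka, mul_neg]
    _ = -∫ x, ∫ a, fderiv ℝ φ x v * (q a * k x a) ∂ν ∂μ := by
        simp only [integral_neg]
        rw [← integral_prod _ h₂, integral_prod_symm _ h₂]
    _ = -∫ x, fderiv ℝ φ x v * p x ∂μ := by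
        refine congrArg _ (integral_congr_ae (hp.mono fun x hx => ?_))
        simp only [integral_const_mul, hx]

end Derivatives

section Gradient

variable {α E : Type*} [MeasurableSpace α] {ν : Measure α} [NormedAddCommGroup E]
  [InnerProductSpace ℝ E] [FiniteDimensional ℝ E] [MeasurableSpace E] [BorelSpace E]

lemma measurable_gradient_of_measurable_uncurry {f : E → α → ℝ}
    (hf : Measurable (Function.uncurry f)) (hd : ∀ a, Differentiable ℝ (f · a)) :
    Measurable fun z : α × E => gradient (f · z.1) z.2 := by
  let b := stdOrthonormalBasis ℝ E
  have hsum : (fun z : α × E => gradient (f · z.1) z.2)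
      = fun z => ∑ i, fderiv ℝ (f · z.1) z.2 (b i) • b i := by
    funext z
    simpa only [inner_gradient_right, conj_trivial] using
      (b.sum_repr' (gradient (f · z.1) z.2)).symm
  rw [hsum]
  exact Finset.measurable_sum _ fun i _ =>
    (measurable_fderiv_apply_of_measurable_uncurry hf hd (b i)).smul_const _

theorem ae_integral_smul_gradient_eq_gradient {μ : Measure E} [μ.IsAddHaarMeasure] [SFinite ν]
    {q : α → ℝ} {k : E → α → ℝ} {p : E → ℝ} (hk : ∀ a, ContDiff ℝ 1 (k · a))
    (hp_diff : Differentiable ℝ p)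
    (hqk : Integrable (fun z : α × E => q z.1 * k z.2 z.1) (ν.prod μ))
    (hqG : Integrable (fun z : α × E => q z.1 • gradient (k · z.1) z.2) (ν.prod μ))
    (hGp : Integrable (gradient p) μ) (hp : ∀ᵐ x ∂μ, p x = ∫ a, q a * k x a ∂ν) :
    ∀ᵐ x ∂μ, ∫ a, q a • gradient (k · a) x ∂ν = gradient p x := by
  have hg : Integrable (fun x => ∫ a, q a • gradient (k · a) x ∂ν) μ :=
    hqG.swap.integral_prod_left
  refine ae_eq_of_integral_contDiff_smul_eq hg.locallyIntegrable hGp.locallyIntegrable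
    fun φ hφ hφs => ext_inner_left ℝ fun v => ?_
  have hφ1 : ContDiff ℝ 1 φ := hφ.of_le (by simp)
  have hqG' : Integrable (fun z : α × E => q z.1 * fderiv ℝ (k · z.1) z.2 v) (ν.prod μ) := by
    simpa only [inner_smul_right, inner_gradient_right, conj_trivial] using
      Integrable.const_inner (𝕜 := ℝ) v hqG
  have hGp' : LocallyIntegrable (fun x => fderiv ℝ p x v) μ := by
    simpa only [inner_gradient_right, conj_trivial] using
      (Integrable.const_inner (𝕜 := ℝ) v hGp).locallyIntegrable
  rw [← integral_inner (hg.locallyIntegrable.integrable_smul_left_of_hasCompactSupport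
      hφ.continuous hφs) v,
    ← integral_inner (hGp.locallyIntegrable.integrable_smul_left_of_hasCompactSupport
      hφ.continuous hφs) v]
  calc ∫ x, inner ℝ v (φ x • ∫ a, q a • gradient (k · a) x ∂ν) ∂μ
      = ∫ x, φ x * ∫ a, q a * fderiv ℝ (k · a) x v ∂ν ∂μ := by
        refine integral_congr_ae (hqG.prod_left_ae.mono fun x hx => ?_)
        simp only [inner_smul_right, ← integral_inner hx, inner_gradient_right, conj_trivial]
    _ = -∫ x, fderiv ℝ φ x v * p x ∂μ :=
        integral_mul_integral_fderiv_eq_neg hφ1 hφs hk hqk hqG' hp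
    _ = ∫ x, φ x * fderiv ℝ p x v ∂μ :=
        (integral_mul_fderiv_eq_neg_of_hasCompactSupport hφ1 hφs hp_diff hGp').symm
    _ = ∫ x, inner ℝ v (φ x • gradient p x) ∂μ := by
        simp only [inner_smul_right, inner_gradient_right, conj_trivial]

end Gradient

section Score

variable {n : ℕ}

lemma smul_scoreOf {f : Euc n → ℝ} {x : Euc n} (hf : DifferentiableAt ℝ f x) (hx : 0 < f x) :
    f x • scoreOf f x = gradient f x := by
  have hlog : HasFDerivAt (fun u => Real.log (f u)) ((f x)⁻¹ • fderiv ℝ f x) x :=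
    (Real.hasDerivAt_log hx.ne').comp_hasFDerivAt x hf.hasFDerivAt
  rw [scoreOf, gradient, gradient, hlog.fderiv, map_smul, smul_smul, mul_inv_cancel₀ hx.ne',
    one_smul]

lemma measurable_scoreOf (f : Euc n → ℝ) : Measurable (scoreOf f) := by
  borelize (Euc n →L[ℝ] ℝ)
  exact (InnerProductSpace.toDual ℝ (Euc n)).symm.continuous.measurable.comp
    (measurable_fderiv ℝ _)

lemma measurable_scoreOf_uncurry {k : Euc n → Euc n → ℝ}
    (hk_meas : Measurable fun z : Euc n × Euc n => k z.1 z.2) (hk_pos : ∀ a x, 0 < k x a)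
    (hk_diff : ∀ a, Differentiable ℝ (k · a)) :
    Measurable fun z : Euc n × Euc n => scoreOf (k · z.1) z.2 :=
  measurable_gradient_of_measurable_uncurry (f := fun x a => Real.log (k x a))
    (Real.measurable_log.comp hk_meas) fun a => (hk_diff a).log fun x => (hk_pos a x).ne'

lemma ae_integral_smul_scoreOf_eq {q₀ p : Euc n → ℝ} {k : Euc n → Euc n → ℝ}
    (hq₀_nonneg : 0 ≤ q₀) (hk_pos : ∀ a x, 0 < k x a) (hk_diff : ∀ a, ContDiff ℝ 1 (k · a))
    (hp_pos : ∀ x, 0 < p x) (hp_diff : Differentiable ℝ p)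
    (hqk : Integrable fun z : Euc n × Euc n => q₀ z.1 * k z.2 z.1)
    (hs : AEStronglyMeasurable fun z : Euc n × Euc n => scoreOf (k · z.1) z.2)
    (hqks : Integrable fun z : Euc n × Euc n =>
      q₀ z.1 * k z.2 z.1 * ‖scoreOf (k · z.1) z.2‖ ^ 2)
    (hps : Integrable fun x => p x * ‖scoreOf p x‖ ^ 2)
    (hp : ∀ᵐ x, p x = ∫ a, q₀ a * k x a) :
    ∀ᵐ x, ∫ a, (q₀ a * k x a) • scoreOf (k · a) x = p x • scoreOf p x := by
  have hp_int : Integrable p := hqk.swap.integral_prod_left.congr (hp.mono fun x hx => hx.symm)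
  have hG (a x : Euc n) : (q₀ a * k x a) • scoreOf (k · a) x = q₀ a • gradient (k · a) x := by
    rw [mul_smul, smul_scoreOf ((hk_diff a).differentiable one_ne_zero x) (hk_pos a x)]
  have hqG := integrable_smul_of_mul_norm_sq
    (fun z => mul_nonneg (hq₀_nonneg z.1) (hk_pos z.1 z.2).le) hs hqk hqks
  have hGp := integrable_smul_of_mul_norm_sq (fun x => (hp_pos x).le)
    (measurable_scoreOf p).aestronglyMeasurable hp_int hps
  simp only [hG, smul_scoreOf (hp_diff _) (hp_pos _)] at hqG hGp ⊢
  exact ae_integral_smul_gradient_eq_gradient hk_diff hp_diff hqk hqG hGp hp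

end Score

theorem stmt_1_general (n : ℕ)
    (q₀ : Euc n → ℝ) (hq₀_nonneg : ∀ x, 0 ≤ q₀ x) (hq₀_meas : Measurable q₀)
    (hq₀_prob : (∫ x : Euc n, q₀ x) = 1)
    (k : Euc n → Euc n → ℝ)  -- `k xt x₀` is the density `k(x_t | x₀)`
    (hk_meas : Measurable fun z : Euc n × Euc n => k z.1 z.2)
    (hk_pos : ∀ x₀ xt, 0 < k xt x₀)
    (hk_diff : ∀ x₀, ContDiff ℝ 1 fun xt => k xt x₀)
    (hk_prob : ∀ x₀, (∫ xt : Euc n, k xt x₀) = 1)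
    (p : Euc n → ℝ) (hp : ∀ xt, p xt = ∫ x₀ : Euc n, q₀ x₀ * k xt x₀)
    (hp_pos : ∀ xt, 0 < p xt) (hp_diff : Differentiable ℝ p)
    (hfin_dsm : dsmFin n q₀ k fun _ => 0)
    (hfin_sm : smFin n p fun _ => 0) :
    ∃ C : ℝ,
      (∀ ψ : Euc n → Euc n, Measurable ψ → dsmFin n q₀ k ψ → smFin n p ψ →
        dsmObj n q₀ k ψ = smObj n p ψ + C)
      ∧ ∀ Ψ : Set (Euc n → Euc n),
          (∀ ψ ∈ Ψ, Measurable ψ ∧ dsmFin n q₀ k ψ ∧ smFin n p ψ) →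
          ∀ ψ₀ ∈ Ψ, ((∀ ψ ∈ Ψ, dsmObj n q₀ k ψ₀ ≤ dsmObj n q₀ k ψ) ↔
            (∀ ψ ∈ Ψ, smObj n p ψ₀ ≤ smObj n p ψ)) := by
  have hw0 : 0 ≤ fun z : Euc n × Euc n => q₀ z.1 * k z.2 z.1 :=
    fun z => mul_nonneg (hq₀_nonneg z.1) (hk_pos z.1 z.2).le
  have hw : Integrable fun z : Euc n × Euc n => q₀ z.1 * k z.2 z.1 :=
    integrable_prod_mul_of_integral_eq_one (.of_integral_ne_zero (by simp [hq₀_prob]))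
      (fun a x => (hk_pos a x).le) hk_prob
      ((hq₀_meas.comp measurable_fst).mul (hk_meas.comp measurable_swap)).aestronglyMeasurable
  have hs := measurable_scoreOf_uncurry hk_meas hk_pos fun a =>
    (hk_diff a).differentiable one_ne_zero
  have hws : Integrable fun z : Euc n × Euc n =>
      q₀ z.1 * k z.2 z.1 * ‖scoreOf (k · z.1) z.2‖ ^ 2 := by
    simpa only [dsmFin, sub_zero] using hfin_dsm
  have hps : Integrable fun x => p x * ‖scoreOf p x‖ ^ 2 := by
    simpa only [smFin, sub_zero] using hfin_sm
  have hvincent (ψ : Euc n → Euc n) (hψ : Measurable ψ) (hdψ : dsmFin n q₀ k ψ)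
      (hsψ : smFin n p ψ) :
      dsmObj n q₀ k ψ = smObj n p ψ + (dsmObj n q₀ k 0 - smObj n p 0) := by
    simpa only [dsmObj, smObj, Pi.zero_apply, sub_zero, Measure.volume_eq_prod] using
      integral_prod_mul_norm_sub_sq_eq_add hw0 (fun x => (hp_pos x).le) hw hs.aestronglyMeasurable
        (measurable_scoreOf p).aestronglyMeasurable hψ.aestronglyMeasurable hws hps hdψ hsψ
        (.of_forall fun x => (hp x).symm)
        (ae_integral_smul_scoreOf_eq hq₀_nonneg hk_pos hk_diff hp_pos hp_diff hw
          hs.aestronglyMeasurable hws hps (.of_forall hp))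
  refine ⟨_, hvincent, fun Ψ hΨ ψ₀ hψ₀ => forall₂_congr fun ψ hψ => ?_⟩
  rw [hvincent ψ₀ (hΨ ψ₀ hψ₀).1 (hΨ ψ₀ hψ₀).2.1 (hΨ ψ₀ hψ₀).2.2,
    hvincent ψ (hΨ ψ hψ).1 (hΨ ψ hψ).2.1 (hΨ ψ hψ).2.2, add_le_add_iff_right]

/-- denoising score matching, Vincent's identity. There is a constant `C`,
independent of `ψ`, such that for every measurable `ψ` for which both objectives are finite,
`E_{x₀∼q₀} E_{x_t∼k(·|x₀)}[‖∇ ln k(x_t|x₀) − ψ(x_t)‖²]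
  = E_{x_t∼p}[‖∇ ln p(x_t) − ψ(x_t)‖²] + C`;
in particular over any family of such functions the two objectives have the same minimizers. -/
theorem stmt_1 (n : ℕ) (hn : 1 ≤ n)
    (q₀ : Euc n → ℝ) (hq₀_nonneg : ∀ x, 0 ≤ q₀ x) (hq₀_meas : Measurable q₀)
    (hq₀_prob : (∫ x : Euc n, q₀ x) = 1)
    (k : Euc n → Euc n → ℝ)  -- `k xt x₀` is the density `k(x_t | x₀)`
    (hk_meas : Measurable fun z : Euc n × Euc n => k z.1 z.2)
    (hk_pos : ∀ x₀ xt, 0 < k xt x₀)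
    (hk_diff : ∀ x₀, ContDiff ℝ 1 fun xt => k xt x₀)
    (hk_prob : ∀ x₀, (∫ xt : Euc n, k xt x₀) = 1)
    (p : Euc n → ℝ) (hp : ∀ xt, p xt = ∫ x₀ : Euc n, q₀ x₀ * k xt x₀)
    (hp_pos : ∀ xt, 0 < p xt) (hp_diff : Differentiable ℝ p)
    (hfin_dsm : dsmFin n q₀ k fun _ => 0)
    (hfin_sm : smFin n p fun _ => 0) :
    ∃ C : ℝ,
      (∀ ψ : Euc n → Euc n, Measurable ψ → dsmFin n q₀ k ψ → smFin n p ψ →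
        dsmObj n q₀ k ψ = smObj n p ψ + C)
      ∧ ∀ Ψ : Set (Euc n → Euc n),
          (∀ ψ ∈ Ψ, Measurable ψ ∧ dsmFin n q₀ k ψ ∧ smFin n p ψ) →
          ∀ ψ₀ ∈ Ψ, ((∀ ψ ∈ Ψ, dsmObj n q₀ k ψ₀ ≤ dsmObj n q₀ k ψ) ↔
            (∀ ψ ∈ Ψ, smObj n p ψ₀ ≤ smObj n p ψ)) :=
  stmt_1_general n q₀ hq₀_nonneg hq₀_meas hq₀_prob k hk_meas hk_pos hk_diff hk_prob p hp hp_pos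
    hp_diff hfin_dsm hfin_sm
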